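/- For all u ∈ ℝ, the series T(u) = ∑_{n=0}^∞ uⁿ/(2n+1)! converges; T(u) = sinh(√u)/√u for u > 0, T(u) = sin(√(-u))/√(-u) for u < 0, and T(0) = 1. Moreover T(u) > 0 whenever u > -π². -/

import Mathlib

open Real

/-- Analytic extension of `sinh (√u) / √u` to all real `u`,
given by the power series `∑ uⁿ/(2n+1)!`. -/
noncomputable def T (u : ℝ) : ℝ := ∑' n : ℕ, u ^ n / (2 * n + 1).factorial

/-! Writing `u = s²` or `u = -s²` turns the series into the Taylor series of `sinh s / s` or
`sin s / s`; for `-π² < u < 0` positivity is that of `sin` on `(0, π)`. -/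

lemma summable_pow_div_factorial_two_mul_add_one (u : ℝ) :
    Summable (fun n : ℕ => u ^ n / ((2 * n + 1).factorial : ℝ)) := by
  refine .of_norm_bounded (Real.summable_pow_div_factorial |u|) fun n => ?_
  rw [Real.norm_eq_abs, abs_div, abs_pow, Nat.abs_cast]
  gcongr
  omega

lemma hasSum_sq_pow_div_factorial {s : ℝ} (hs : s ≠ 0) :
    HasSum (fun n : ℕ => (s ^ 2) ^ n / ((2 * n + 1).factorial : ℝ)) (sinh s / s) := by
  convert (Real.hasSum_sinh s).div_const s using 1
  · rfl
  funext n
  field_simp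
  ring

lemma hasSum_neg_sq_pow_div_factorial {s : ℝ} (hs : s ≠ 0) :
    HasSum (fun n : ℕ => (-s ^ 2) ^ n / ((2 * n + 1).factorial : ℝ)) (sin s / s) := by
  convert (Real.hasSum_sin s).div_const s using 1
  · rfl
  funext n
  rw [neg_pow, ← pow_mul, pow_succ]
  field_simp

lemma T_eq_sinh_sqrt_div_sqrt {u : ℝ} (hu : 0 < u) : T u = sinh (√u) / √u := by
  have h := hasSum_sq_pow_div_factorial (Real.sqrt_pos.mpr hu).ne'
  rw [Real.sq_sqrt hu.le] at h
  exact h.tsum_eq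

lemma T_eq_sin_sqrt_neg_div_sqrt_neg {u : ℝ} (hu : u < 0) : T u = sin (√(-u)) / √(-u) := by
  have h := hasSum_neg_sq_pow_div_factorial (Real.sqrt_pos.mpr (neg_pos.mpr hu)).ne'
  rw [Real.sq_sqrt (neg_nonneg.mpr hu.le), neg_neg] at h
  exact h.tsum_eq

lemma T_zero : T 0 = 1 := by
  rw [T, tsum_eq_single 0 fun n hn => by simp [zero_pow hn]]
  simp

lemma T_pos {u : ℝ} (hu : -π ^ 2 < u) : 0 < T u := by
  rcases lt_trichotomy u 0 with hneg | rfl | hpos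
  · have hs : 0 < √(-u) := Real.sqrt_pos.mpr (neg_pos.mpr hneg)
    have hsπ : √(-u) < π := (Real.sqrt_lt' pi_pos).mpr (by linarith)
    rw [T_eq_sin_sqrt_neg_div_sqrt_neg hneg]
    exact div_pos (sin_pos_of_pos_of_lt_pi hs hsπ) hs
  · exact T_zero ▸ one_pos
  · have hs : 0 < √u := Real.sqrt_pos.mpr hpos
    rw [T_eq_sinh_sqrt_div_sqrt hpos]
    exact div_pos (sinh_pos_iff.mpr hs) hs

theorem stmt_14 (u : ℝ) :
    Summable (fun n : ℕ => u ^ n / ((2 * n + 1).factorial : ℝ)) ∧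
    (0 < u → T u = Real.sinh (Real.sqrt u) / Real.sqrt u) ∧
    (u < 0 → T u = Real.sin (Real.sqrt (-u)) / Real.sqrt (-u)) ∧
    T 0 = 1 ∧
    (-π ^ 2 < u → 0 < T u) :=
  ⟨summable_pow_div_factorial_two_mul_add_one u, T_eq_sinh_sqrt_div_sqrt,
    T_eq_sin_sqrt_neg_div_sqrt_neg, T_zero, T_pos⟩
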